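/- arXiv:1401.5400 — 2 statements merged into one kernel-verified Lean document; each statement's English description precedes it below -/
import Mathlib

section
/- Define B(a,b,c) = Σ_{i=0}^{a-1} Σ_{j=0}^{b-1} Σ_{k=0}^{c-1} (i+j+k)!/(i!·j!·k!). Then for natural numbers a, b ≥ 0 and c ≥ 1, B(a+1,b+1,c-1) + B(a,b,c) = (a+b+c)! / ((a+b+1)·a!·b!·(c-1)!) - 1. -/
/-!
Write `T i j k = (i+j+k)!/(i! j! k!)`. From `(i+1) T(i+1,j,k) = (i+j+k+1) T(i,j,k)` and its two
analogues one gets Pascal's rule `T(i+1,j+1,k+1) = T(i,j+1,k+1) + T(i+1,j,k+1) + T(i+1,j+1,k)`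
(and its versions on the faces `i = 0`, `j = 0`, `k = 0`). Summed over a rectangle, it telescopes:
with `S_k(a,b) = ∑_{i<a, j<b} T(i,j,k)`, we get `S_k(a+1,b+1) + S_{k+1}(a,b) = T(a,b,k+1)` and
`S_0(a,b) + 1 = T(a,b,0)`. Summing over `k` collapses `B(a+1,b+1,d) + B(a,b,d+1) + 1` to
`∑_{k ≤ d} T(a,b,k)`, a hockey-stick sum with the closed form on the right-hand side.
-/

open Finset

/-- `B(a,b,c)`: triple sum of multinomial coefficients `(i+j+k)!/(i!j!k!)`
over `0 ≤ i < a`, `0 ≤ j < b`, `0 ≤ k < c`. -/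
def B (a b c : ℕ) : ℚ :=
  ∑ i ∈ Finset.range a, ∑ j ∈ Finset.range b, ∑ k ∈ Finset.range c,
    ((i + j + k).factorial : ℚ) / (i.factorial * j.factorial * k.factorial)

open Nat

def trinomial (i j k : ℕ) : ℚ := (i + j + k)! / (i ! * j ! * k !)

lemma succ_mul_trinomial_succ_left (i j k : ℕ) :
    (i + 1) * trinomial (i + 1) j k = (i + j + k + 1) * trinomial i j k := by
  rw [trinomial, trinomial, show i + 1 + j + k = i + j + k + 1 by ring, factorial_succ,
    factorial_succ]
  push_cast
  field_simp

lemma succ_mul_trinomial_succ_mid (i j k : ℕ) :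
    (j + 1) * trinomial i (j + 1) k = (i + j + k + 1) * trinomial i j k := by
  rw [trinomial, trinomial, show i + (j + 1) + k = i + j + k + 1 by ring, factorial_succ,
    factorial_succ]
  push_cast
  field_simp

lemma succ_mul_trinomial_succ_right (i j k : ℕ) :
    (k + 1) * trinomial i j (k + 1) = (i + j + k + 1) * trinomial i j k := by
  rw [trinomial, trinomial, ← add_assoc, factorial_succ, factorial_succ]
  push_cast
  field_simp

lemma trinomial_succ_succ_succ (i j k : ℕ) :
    trinomial (i + 1) (j + 1) (k + 1) =
      trinomial i (j + 1) (k + 1) + trinomial (i + 1) j (k + 1) + trinomial (i + 1) (j + 1) k := by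
  have h₁ := succ_mul_trinomial_succ_left i (j + 1) (k + 1)
  have h₂ := succ_mul_trinomial_succ_mid (i + 1) j (k + 1)
  have h₃ := succ_mul_trinomial_succ_right (i + 1) (j + 1) k
  push_cast at h₁ h₂ h₃
  refine mul_left_cancel₀ (by positivity : (i + j + k + 3 : ℚ) ≠ 0) ?_
  linear_combination h₁ + h₂ + h₃

lemma trinomial_zero_succ_succ (j k : ℕ) :
    trinomial 0 (j + 1) (k + 1) = trinomial 0 j (k + 1) + trinomial 0 (j + 1) k := by
  have h₂ := succ_mul_trinomial_succ_mid 0 j (k + 1)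
  have h₃ := succ_mul_trinomial_succ_right 0 (j + 1) k
  push_cast at h₂ h₃
  refine mul_left_cancel₀ (by positivity : (j + k + 2 : ℚ) ≠ 0) ?_
  linear_combination h₂ + h₃

lemma trinomial_succ_zero_succ (i k : ℕ) :
    trinomial (i + 1) 0 (k + 1) = trinomial i 0 (k + 1) + trinomial (i + 1) 0 k := by
  have h₁ := succ_mul_trinomial_succ_left i 0 (k + 1)
  have h₃ := succ_mul_trinomial_succ_right (i + 1) 0 k
  push_cast at h₁ h₃
  refine mul_left_cancel₀ (by positivity : (i + k + 2 : ℚ) ≠ 0) ?_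
  linear_combination h₁ + h₃

lemma trinomial_succ_succ_zero (i j : ℕ) :
    trinomial (i + 1) (j + 1) 0 = trinomial i (j + 1) 0 + trinomial (i + 1) j 0 := by
  have h₁ := succ_mul_trinomial_succ_left i (j + 1) 0
  have h₂ := succ_mul_trinomial_succ_mid (i + 1) j 0
  push_cast at h₁ h₂
  refine mul_left_cancel₀ (by positivity : (i + j + 2 : ℚ) ≠ 0) ?_
  linear_combination h₁ + h₂

lemma sum_range_succ_trinomial_zero_left (j k : ℕ) :
    ∑ i ∈ range (j + 1), trinomial 0 i k = trinomial 0 j (k + 1) := by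
  induction j with
  | zero => simp [trinomial, factorial_ne_zero]
  | succ j ih => rw [sum_range_succ, ih, trinomial_zero_succ_succ]

lemma sum_range_trinomial_right_zero (i j : ℕ) :
    ∑ l ∈ range j, trinomial i l 0 = trinomial (i + 1) j 0 - trinomial i j 0 := by
  induction j with
  | zero => simp [trinomial, factorial_ne_zero]
  | succ j ih =>
    rw [sum_range_succ, ih, trinomial_succ_succ_zero]
    ring

lemma sum_range_succ_trinomial_add_trinomial (i j k : ℕ) :
    ∑ l ∈ range (j + 1), (trinomial (i + 1) l k + trinomial i l (k + 1)) =
      trinomial (i + 1) j (k + 1) := by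
  induction j with
  | zero => simpa [add_comm] using (trinomial_succ_zero_succ i k).symm
  | succ j ih =>
    rw [sum_range_succ, ih, trinomial_succ_succ_succ]
    ring

def layer (a b k : ℕ) : ℚ := ∑ i ∈ range a, ∑ j ∈ range b, trinomial i j k

lemma layer_succ (a b k : ℕ) :
    layer (a + 1) b k = layer a b k + ∑ j ∈ range b, trinomial a j k :=
  sum_range_succ _ a

lemma layer_zero_add_one (a b : ℕ) : layer a b 0 + 1 = trinomial a b 0 := by
  induction a with
  | zero => simp [layer, trinomial, factorial_ne_zero]
  | succ a ih =>
    rw [layer_succ, sum_range_trinomial_right_zero]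
    linarith

lemma layer_succ_succ_add_layer_succ (a b k : ℕ) :
    layer (a + 1) (b + 1) k + layer a b (k + 1) = trinomial a b (k + 1) := by
  induction a with
  | zero => simpa [layer] using sum_range_succ_trinomial_zero_left b k
  | succ a ih =>
    have h := sum_range_succ_trinomial_add_trinomial a b k
    rw [sum_add_distrib, sum_range_succ (fun l => trinomial a l (k + 1))] at h
    rw [layer_succ (a + 1), layer_succ a b (k + 1)]
    linarith

lemma B_succ (a b c : ℕ) : B a b (c + 1) = B a b c + layer a b c := by
  simp only [B, layer, trinomial, sum_range_succ, sum_add_distrib]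

lemma B_succ_succ_add_B_succ (a b d : ℕ) :
    B (a + 1) (b + 1) d + B a b (d + 1) + 1 = ∑ k ∈ range (d + 1), trinomial a b k := by
  induction d with
  | zero =>
    rw [sum_range_one, B_succ, ← layer_zero_add_one]
    simp [B]
  | succ d ih =>
    rw [B_succ (a + 1), B_succ a b (d + 1), sum_range_succ _ (d + 1),
      ← layer_succ_succ_add_layer_succ a b d]
    linarith

lemma sum_range_succ_trinomial (a b c : ℕ) :
    ∑ k ∈ range (c + 1), trinomial a b k =
      (a + b + c + 1)! / ((a + b + 1) * a ! * b ! * c !) := by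
  induction c with
  | zero =>
    rw [sum_range_one, trinomial, add_zero, factorial_succ]
    push_cast
    field_simp
  | succ c ih =>
    rw [sum_range_succ, ih, trinomial, show a + b + (c + 1) = a + b + c + 1 by ring,
      factorial_succ (a + b + c + 1), factorial_succ c, factorial_succ (a + b + c)]
    push_cast
    field_simp
    ring

theorem stmt16 (a b c : ℕ) (hc : 1 ≤ c) :
    B (a + 1) (b + 1) (c - 1) + B a b c =
      ((a + b + c).factorial : ℚ) /
        ((a + b + 1) * a.factorial * b.factorial * (c - 1).factorial) - 1 := by
  obtain ⟨d, rfl⟩ : ∃ d, c = d + 1 := ⟨c - 1, by omega⟩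
  rw [Nat.add_sub_cancel, ← add_assoc, ← sum_range_succ_trinomial, ← B_succ_succ_add_B_succ]
  ring
end

section
/- Define B(a,b,c) = Σ_{i=0}^{a-1} Σ_{j=0}^{b-1} Σ_{k=0}^{c-1} (i+j+k)!/(i!·j!·k!). Then for natural numbers a, b ≥ 0 and c ≥ 1, B(a,b,c+1) - B(a,b,c-1) = a·b·(a+b+2c)·(a+b+c-1)! / ((a+c)·(b+c)·a!·b!·c!). -/
open Finset

/-! Only the layers `k = c - 1` and `k = c` survive in `B a b (c + 1) - B a b (c - 1)`, and the two
multinomial coefficients there combine into `(i + j + 2c) (i + j + c - 1)! / (i! j! c!)`. This double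
sum has a hypergeometric closed form in each variable, so it is evaluated by summing first over `j`
and then over `i`, each time checking the closed form by induction on the upper limit. -/

def multinomialTerm (i j k : ℕ) : ℚ :=
  ((i + j + k).factorial : ℚ) / (i.factorial * j.factorial * k.factorial)

def twoLayerTerm (d i j : ℕ) : ℚ :=
  ((i : ℚ) + j + 2 * d + 2) * ((i + j + d).factorial : ℚ) /
    (i.factorial * j.factorial * (d + 1).factorial)

lemma multinomialTerm_succ_add_multinomialTerm (i j d : ℕ) :
    multinomialTerm i j (d + 1) + multinomialTerm i j d = twoLayerTerm d i j := by
  rw [multinomialTerm, multinomialTerm, twoLayerTerm, ← add_assoc,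
    Nat.factorial_succ (i + j + d), Nat.factorial_succ d]
  push_cast
  field_simp
  ring

lemma B_add_two_sub_B (a b d : ℕ) :
    B a b (d + 2) - B a b d = ∑ i ∈ range a, ∑ j ∈ range b, twoLayerTerm d i j := by
  have hB (c : ℕ) : B a b c = ∑ i ∈ range a, ∑ j ∈ range b, ∑ k ∈ range c, multinomialTerm i j k :=
    rfl
  rw [hB, hB, ← sum_sub_distrib]
  refine sum_congr rfl fun i _ ↦ ?_
  rw [← sum_sub_distrib]
  refine sum_congr rfl fun j _ ↦ ?_
  rw [sum_range_succ, sum_range_succ, ← multinomialTerm_succ_add_multinomialTerm]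
  abel

lemma sum_range_twoLayerTerm (d i b : ℕ) :
    ∑ j ∈ range b, twoLayerTerm d i j =
      (b : ℚ) * (((i : ℚ) + d + 1) * ((i : ℚ) + b + 2 * d + 2) + (d + 1)) *
          ((i + b + d).factorial : ℚ) /
        (((i : ℚ) + d + 2) * ((i : ℚ) + d + 1) * i.factorial * b.factorial * (d + 1).factorial) := by
  induction b with
  | zero => simp
  | succ b ih =>
    rw [sum_range_succ, ih, twoLayerTerm, show i + (b + 1) + d = i + b + d + 1 by ring,
      Nat.factorial_succ (i + b + d), Nat.factorial_succ b]
    push_cast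
    field_simp
    ring

lemma sum_range_sum_range_twoLayerTerm (d a b : ℕ) :
    ∑ i ∈ range a, ∑ j ∈ range b, twoLayerTerm d i j =
      (a : ℚ) * b * ((a : ℚ) + b + 2 * d + 2) * ((a + b + d).factorial : ℚ) /
        (((a : ℚ) + d + 1) * ((b : ℚ) + d + 1) * a.factorial * b.factorial *
          (d + 1).factorial) := by
  induction a with
  | zero => simp
  | succ a ih =>
    rw [sum_range_succ, ih, sum_range_twoLayerTerm, show a + 1 + b + d = a + b + d + 1 by ring,
      Nat.factorial_succ (a + b + d), Nat.factorial_succ a]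
    push_cast
    field_simp
    ring

theorem stmt17 (a b c : ℕ) (hc : 1 ≤ c) :
    B a b (c + 1) - B a b (c - 1) =
      (a : ℚ) * b * ((a : ℚ) + b + 2 * c) * ((a + b + c - 1).factorial : ℚ) /
        (((a : ℚ) + c) * ((b : ℚ) + c) * a.factorial * b.factorial * c.factorial) := by
  obtain ⟨d, rfl⟩ : ∃ d, c = d + 1 := ⟨c - 1, by omega⟩
  rw [Nat.add_sub_cancel, show a + b + (d + 1) - 1 = a + b + d by omega, B_add_two_sub_B,
    sum_range_sum_range_twoLayerTerm]
  push_cast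
  ring
end
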